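/- The Randomized Egalitarian Welfare mechanism is optimal for egalitarian welfare and satisfies 2-UFS in expectation: for every n ≥ 1 and every profile x ∈ [0,1]^n, (a) for every agent i, E(x, x_i) ≥ |{j : x_j = x_i}|/(2n), and (b) for every Borel probability measure μ on [0,1], min_i ∫ |y − x_i| dμ(y) ≤ min_i E(x, x_i), where E(x, p) = 1 − p if all x_j ∈ [0, 1/2], E(x, p) = p if all x_j ∈ (1/2, 1], and E(x, p) = 1/2 otherwise. Consequently, in the randomized setting the price of 2-UFS for egalitarian welfare is 1. -/
import Mathlib

open MeasureTheory

lemma absSubLeAux {x y : ℝ} (hx0 : 0 ≤ x) (hx1 : x ≤ 1) (hy0 : 0 ≤ y) (hy1 : y ≤ 1) :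
    |y - x| ≤ x + y - 2*x*y := by
  rw [abs_le]
  constructor <;> nlinarith

lemma aeIccOfProb (μ : Measure ℝ) [IsProbabilityMeasure μ]
    (h : μ (Set.Icc (0:ℝ) 1) = 1) : ∀ᵐ y ∂μ, y ∈ Set.Icc (0:ℝ) 1 := by
  have hc : μ (Set.Icc (0:ℝ) 1)ᶜ = 0 := by
    rw [measure_compl measurableSet_Icc (measure_ne_top μ _), h, measure_univ, tsub_self]
  rw [ae_iff]
  exact hc

lemma integrableAbsSub (μ : Measure ℝ) [IsProbabilityMeasure μ]
    (h : μ (Set.Icc (0:ℝ) 1) = 1) (x : ℝ) :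
    Integrable (fun y => |y - x|) μ := by
  refine (integrable_const (1 + |x|)).mono'
    ((continuous_id.sub continuous_const).abs.aestronglyMeasurable) ?_
  filter_upwards [aeIccOfProb μ h] with y hy
  rw [Real.norm_eq_abs, abs_abs]
  have h1 : |y| ≤ 1 := abs_le.mpr ⟨by linarith [hy.1], hy.2⟩
  have h2 : |y - x| ≤ |y| + |x| := by
    have := abs_add_le y (-x)
    rw [← sub_eq_add_neg, abs_neg] at this
    exact this
  linarith

open Classical in
/-- Expected distance of the point `p` from the facility under the Randomized
Egalitarian Welfare mechanism, given the profile `x`. -/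
noncomputable def randEgalExpDist (n : ℕ) (x : Fin n → ℝ) (p : ℝ) : ℝ :=
  if ∀ i, x i ≤ 1/2 then 1 - p
  else if ∀ i, 1/2 < x i then p
  else 1/2

open Classical in
/-- The Randomized Egalitarian Welfare mechanism satisfies 2-UFS in expectation
and is optimal for (expected) egalitarian welfare among all randomized mechanisms;
hence in the randomized setting the price of 2-UFS for egalitarian welfare is 1. -/
theorem randomized_egalitarian_optimal_and_two_UFS (n : ℕ) (hn : 1 ≤ n)
    (x : Fin n → ℝ) (hx : ∀ i, x i ∈ Set.Icc (0:ℝ) 1) :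
    (∀ i, ((Finset.univ.filter (fun j => x j = x i)).card : ℝ) / (2*n) ≤
      randEgalExpDist n x (x i)) ∧
    (∀ μ : MeasureTheory.Measure ℝ, MeasureTheory.IsProbabilityMeasure μ →
      μ (Set.Icc (0:ℝ) 1) = 1 →
      (⨅ i, ∫ y, |y - x i| ∂μ) ≤ ⨅ i, randEgalExpDist n x (x i)) := by
  have hne : Nonempty (Fin n) := ⟨⟨0, hn⟩⟩
  constructor
  · intro i
    have hcard : ((Finset.univ.filter (fun j => x j = x i)).card : ℝ) ≤ n := by
      exact_mod_cast (Finset.card_filter_le _ _).trans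
        (le_of_eq (Finset.card_univ.trans (Fintype.card_fin n)))
    have h2n : (0:ℝ) < 2*n := by positivity
    have hhalf : ((Finset.univ.filter (fun j => x j = x i)).card : ℝ) / (2*n) ≤ 1/2 := by
      rw [div_le_iff₀ h2n]; linarith
    have hE : (1:ℝ)/2 ≤ randEgalExpDist n x (x i) := by
      unfold randEgalExpDist
      by_cases h1 : ∀ j, x j ≤ 1/2
      · rw [if_pos h1]; linarith [h1 i]
      · by_cases h2 : ∀ j, 1/2 < x j
        · rw [if_neg h1, if_pos h2]; linarith [h2 i]
        · rw [if_neg h1, if_neg h2]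
    linarith
  · intro μ hμ hμ1
    haveI := hμ
    have hbdd : BddBelow (Set.range fun i => ∫ y, |y - x i| ∂μ) :=
      (Set.finite_range _).bddBelow
    have hae := aeIccOfProb μ hμ1
    have hintc : ∀ c : ℝ, ∫ _, c ∂μ = c := by intro c; simp
    by_cases h1 : ∀ j, x j ≤ 1/2
    · refine ciInf_mono hbdd ?_
      intro i
      unfold randEgalExpDist
      rw [if_pos h1]
      calc ∫ y, |y - x i| ∂μ ≤ ∫ _, (1 - x i) ∂μ := by
            refine integral_mono_ae (integrableAbsSub μ hμ1 _) (integrable_const _) ?_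
            filter_upwards [hae] with y hy
            rw [abs_le]
            exact ⟨by linarith [hy.1, h1 i], by linarith [hy.2]⟩
        _ = 1 - x i := hintc _
    · by_cases h2 : ∀ j, 1/2 < x j
      · refine ciInf_mono hbdd ?_
        intro i
        unfold randEgalExpDist
        rw [if_neg h1, if_pos h2]
        calc ∫ y, |y - x i| ∂μ ≤ ∫ _, x i ∂μ := by
              refine integral_mono_ae (integrableAbsSub μ hμ1 _) (integrable_const _) ?_
              filter_upwards [hae] with y hy
              rw [abs_le]
              exact ⟨by linarith [hy.1, h2 i], by linarith [hy.2, h2 i]⟩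
          _ = x i := hintc _
      · have hrhs : (⨅ i, randEgalExpDist n x (x i)) = 1/2 := by
          have hfun : (fun i => randEgalExpDist n x (x i)) = fun _ => (1:ℝ)/2 := by
            funext i; unfold randEgalExpDist; rw [if_neg h1, if_neg h2]
          rw [hfun, ciInf_const]
        rw [hrhs]
        obtain ⟨a, ha⟩ := not_forall.mp h1
        obtain ⟨b, hb⟩ := not_forall.mp h2
        push_neg at ha hb
        -- ha : 1/2 < x a, hb : x b ≤ 1/2
        have hd : (0:ℝ) < x a - x b := by linarith
        set L : ℝ := (x a - 1/2) / (x a - x b) with hLdef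
        have hL0 : 0 ≤ L := div_nonneg (by linarith) hd.le
        have hL1 : L ≤ 1 := (div_le_one hd).mpr (by linarith)
        have hLmul : L * (x a - x b) = x a - 1/2 := div_mul_cancel₀ _ hd.ne'
        have hLeq : L * x b + (1 - L) * x a = 1/2 := by nlinarith
        set A : ℝ := ∫ y, |y - x b| ∂μ with hA
        set B : ℝ := ∫ y, |y - x a| ∂μ with hB
        have hiA : Integrable (fun y => |y - x b|) μ := integrableAbsSub μ hμ1 _
        have hiB : Integrable (fun y => |y - x a|) μ := integrableAbsSub μ hμ1 _
        have hsum : L * A + (1 - L) * B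
            = ∫ y, (L * |y - x b| + (1 - L) * |y - x a|) ∂μ := by
          rw [integral_add (hiA.const_mul L) (hiB.const_mul (1 - L)),
            integral_const_mul, integral_const_mul]
        have hkey : L * A + (1 - L) * B ≤ 1/2 := by
          rw [hsum]
          calc ∫ y, (L * |y - x b| + (1 - L) * |y - x a|) ∂μ
              ≤ ∫ _, (1:ℝ)/2 ∂μ := by
                refine integral_mono_ae
                  ((hiA.const_mul L).add (hiB.const_mul (1 - L))) (integrable_const _) ?_
                filter_upwards [hae] with y hy
                have hb1 := absSubLeAux (hx b).1 (hx b).2 hy.1 hy.2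
                have ha1 := absSubLeAux (hx a).1 (hx a).2 hy.1 hy.2
                have e1 : L * |y - x b| ≤ L * (x b + y - 2 * x b * y) :=
                  mul_le_mul_of_nonneg_left hb1 hL0
                have e2 : (1 - L) * |y - x a| ≤ (1 - L) * (x a + y - 2 * x a * y) :=
                  mul_le_mul_of_nonneg_left ha1 (by linarith)
                have e3 : L * (x b + y - 2 * x b * y) + (1 - L) * (x a + y - 2 * x a * y)
                    = 1/2 := by linear_combination (1 - 2*y) * hLeq
                linarith
            _ = 1/2 := hintc _
        have hIA : (⨅ i, ∫ y, |y - x i| ∂μ) ≤ A := ciInf_le hbdd b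
        have hIB : (⨅ i, ∫ y, |y - x i| ∂μ) ≤ B := ciInf_le hbdd a
        nlinarith [mul_le_mul_of_nonneg_left hIA hL0,
          mul_le_mul_of_nonneg_left hIB (by linarith : (0:ℝ) ≤ 1 - L)]
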